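/- arXiv:2507.05225 — 5 statements merged into one kernel-verified Lean document; each statement's English description precedes it below -/
import Mathlib

section
/- Let R be a commutative ring and A an m×n matrix over R. For any positive integer ℓ, let B = A ⊗ Id_ℓ be the block diagonal matrix with ℓ copies of A along the diagonal. Then for every composition r₁ + ⋯ + r_ℓ = r of a positive integer r, the product I_{r₁}(A) ⋯ I_{r_ℓ}(A) ⊆ I_r(B). -/
/-- The ideal of `r × r` minors of a matrix over a commutative ring. -/
def minorsIdeal (R : Type*) [CommRing R] (r : ℕ) {α β : Type*}
    (A : Matrix α β R) : Ideal R :=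
  Ideal.span { d : R | ∃ (f : Fin r → α) (g : Fin r → β), d = (A.submatrix f g).det }

/-- Determinant of a (dependent) block diagonal matrix over a linearly ordered
fintype index is the product of the determinants of the blocks. -/
lemma det_blockDiagonal'_aux {R : Type*} [CommRing R] {o : Type*} [Fintype o] [DecidableEq o] [LinearOrder o]
    {m' : o → Type*} [∀ i, Fintype (m' i)] [∀ i, DecidableEq (m' i)]
    (M : ∀ i, Matrix (m' i) (m' i) R) :
    (Matrix.blockDiagonal' M).det = ∏ i, (M i).det := by
  classical
  have hbt : (Matrix.blockDiagonal' M).BlockTriangular Sigma.fst := by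
    intro p q h
    exact Matrix.blockDiagonal'_apply_ne M _ _ (ne_of_gt h)
  rw [hbt.det_fintype]
  refine Finset.prod_congr rfl fun k _ => ?_
  let eqv : m' k ≃ { p : Σ i, m' i // p.1 = k } :=
    { toFun := fun a => ⟨⟨k, a⟩, rfl⟩
      invFun := fun p => (congrArg m' p.2).mp p.1.2
      left_inv := fun a => rfl
      right_inv := fun p => by
        obtain ⟨⟨i, a⟩, h⟩ := p
        subst h
        rfl }
  rw [← Matrix.det_submatrix_equiv_self eqv]
  congr 1
  ext a b
  simp [Matrix.toSquareBlock, Matrix.toSquareBlockProp, eqv,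
    Matrix.blockDiagonal'_apply_eq]

set_option maxHeartbeats 1000000 in
/-- Let `B = A ⊗ Id_ℓ` be the block diagonal matrix with `ℓ` copies of `A` on the
diagonal. For every composition `r₁ + ⋯ + r_ℓ = r` of a positive integer `r`, the
product `I_{r₁}(A) ⋯ I_{r_ℓ}(A)` is contained in `I_r(B)`. -/
theorem prod_minorsIdeal_le_minorsIdeal_blockDiagonal {R : Type*} [CommRing R] {m n : ℕ}
    (A : Matrix (Fin m) (Fin n) R) (ℓ : ℕ) (hℓ : 0 < ℓ) (r : ℕ) (hr : 0 < r)
    (rs : Fin ℓ → ℕ) (hsum : ∑ i, rs i = r) :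
    (∏ i, minorsIdeal R (rs i) A) ≤
      minorsIdeal R r (Matrix.of fun (p : Fin ℓ × Fin m) (q : Fin ℓ × Fin n) =>
        if p.1 = q.1 then A p.2 q.2 else 0) := by
  classical
  set B : Matrix (Fin ℓ × Fin m) (Fin ℓ × Fin n) R :=
    Matrix.of fun (p : Fin ℓ × Fin m) (q : Fin ℓ × Fin n) =>
      if p.1 = q.1 then A p.2 q.2 else 0 with hB
  unfold minorsIdeal
  rw [Ideal.prod_span, Ideal.span_le]
  intro d hd
  rw [Set.mem_fintype_prod] at hd
  obtain ⟨c, hc, hprod⟩ := hd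
  choose f g hfg using hc
  have hcard : Fintype.card (Σ i : Fin ℓ, Fin (rs i)) = r := by
    simp [Fintype.card_sigma, hsum]
  let e : (Σ i : Fin ℓ, Fin (rs i)) ≃ Fin r := Fintype.equivFinOfCardEq hcard
  apply Ideal.subset_span
  refine ⟨fun k => ((e.symm k).1, f (e.symm k).1 (e.symm k).2),
    fun k => ((e.symm k).1, g (e.symm k).1 (e.symm k).2), ?_⟩
  have key0 : ∀ p q : Σ i : Fin ℓ, Fin (rs i),
      B (p.1, f p.1 p.2) (q.1, g q.1 q.2)
        = (Matrix.blockDiagonal' fun i => A.submatrix (f i) (g i)) p q := by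
    rintro ⟨i, a⟩ ⟨j, b⟩
    by_cases h : i = j
    · subst h
      simp [hB, Matrix.blockDiagonal'_apply_eq]
    · simp [hB, h, Matrix.blockDiagonal'_apply_ne _ _ _ h]
  have key : B.submatrix (fun k => ((e.symm k).1, f (e.symm k).1 (e.symm k).2))
      (fun k => ((e.symm k).1, g (e.symm k).1 (e.symm k).2))
      = (Matrix.blockDiagonal' fun i => A.submatrix (f i) (g i)).submatrix e.symm e.symm := by
    ext k l
    exact key0 (e.symm k) (e.symm l)
  have hdet := det_blockDiagonal'_aux (R := R) (o := Fin ℓ) (m' := fun i => Fin (rs i))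
    (fun i => A.submatrix (f i) (g i))
  rw [key, Matrix.det_submatrix_equiv_self, ← hprod]
  exact (Finset.prod_congr rfl fun i _ => hfg i).trans hdet.symm
end

section
/- Let (R, m, k) be a Noetherian local ring and φ : R^n → R^m an R-linear map with φ(R^n) ⊆ m·R^m. Suppose (a) the image φ(R^n) is minimally generated by n elements, (b) m < n, and (c) there is a minimal generating set {x₁, …, x_e} of m with x_e·x_j = 0 for all 1 ≤ j ≤ e−1 and x_e³ = 0. Then there exists a minimal generator u of φ(R^n) with x_e·u = 0. -/
open IsLocalRing

/-- Lemma 4.4: let `(R, m, k)` be a Noetherian local ring and `φ : Rⁿ → Rᵐ` with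
`φ(Rⁿ) ⊆ m·Rᵐ`. Suppose (a) the image of `φ` is minimally generated by `n` elements
(expressed via the columns of `φ`: whenever `φ(a) ∈ m·im φ` all coordinates `aᵢ ∈ m`),
(b) `m < n`, and (c) there is a minimal generating set `x₀, …, x_e` of `m` with
`x_e · x_j = 0` for `j ≠ e` and `x_e³ = 0`. Then some minimal generator `u` of
`φ(Rⁿ)` satisfies `x_e · u = 0`. -/
theorem exists_annihilated_minimal_generator {R : Type*} [CommRing R]
    [IsNoetherianRing R] [IsLocalRing R] {n m e : ℕ} (he : 1 ≤ e)
    (φ : (Fin n → R) →ₗ[R] (Fin m → R))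
    (hrange : LinearMap.range φ ≤ (maximalIdeal R) • (⊤ : Submodule R (Fin m → R)))
    (hmu : ∀ a : Fin n → R,
      φ a ∈ (maximalIdeal R) • (LinearMap.range φ) → ∀ i, a i ∈ maximalIdeal R)
    (hmn : m < n)
    (x : Fin (e + 1) → R)
    (hgen : Ideal.span (Set.range x) = maximalIdeal R)
    (hminx : ∀ a : Fin (e + 1) → R,
      (∑ i, a i * x i) ∈ (maximalIdeal R) ^ 2 → ∀ i, a i ∈ maximalIdeal R)
    (hxe : ∀ j : Fin (e + 1), j ≠ Fin.last e → x (Fin.last e) * x j = 0)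
    (hcube : x (Fin.last e) ^ 3 = 0) :
    ∃ u ∈ LinearMap.range φ,
      u ∉ (maximalIdeal R) • (LinearMap.range φ) ∧ x (Fin.last e) • u = 0 := by
  set xe := x (Fin.last e) with hxe_def
  -- Step 1 : xe² kills the maximal ideal
  have hsq : ∀ y ∈ maximalIdeal R, xe ^ 2 * y = 0 := by
    intro y hy
    rw [← hgen] at hy
    refine Submodule.span_induction ?_ ?_ ?_ ?_ hy
    · rintro _ ⟨j, rfl⟩
      by_cases hj : j = Fin.last e
      · subst hj
        rw [show xe ^ 2 * x (Fin.last e) = xe ^ 3 by rw [hxe_def]; ring, hcube]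
      · rw [pow_two, mul_assoc, hxe j hj, mul_zero]
    · simp
    · intro a b _ _ ha hb; rw [mul_add, ha, hb, add_zero]
    · intro a b _ hb; rw [smul_eq_mul, mul_left_comm, hb, mul_zero]
  -- Step 2 : xe · m ⊆ (xe²)
  have hA : ∀ y ∈ maximalIdeal R, ∃ r, xe * y = xe ^ 2 * r := by
    intro y hy
    rw [← hgen] at hy
    refine Submodule.span_induction ?_ ?_ ?_ ?_ hy
    · rintro _ ⟨j, rfl⟩
      by_cases hj : j = Fin.last e
      · exact ⟨1, by rw [hj, mul_one, ← hxe_def, pow_two]⟩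
      · exact ⟨0, by rw [hxe j hj, mul_zero]⟩
    · exact ⟨0, by simp⟩
    · rintro a b _ _ ⟨r, hr⟩ ⟨s, hs⟩
      exact ⟨r + s, by rw [mul_add, hr, hs, mul_add]⟩
    · rintro a b _ ⟨r, hr⟩
      exact ⟨a * r, by rw [smul_eq_mul, mul_left_comm, hr, mul_left_comm]⟩
  -- components of elements of m • ⊤ lie in m
  have hcomp : ∀ v ∈ (maximalIdeal R) • (⊤ : Submodule R (Fin m → R)),
      ∀ j, v j ∈ maximalIdeal R := by
    intro v hv j
    refine Submodule.smul_induction_on hv ?_ ?_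
    · intro a ha w _
      simpa using Ideal.mul_mem_right (w j) _ ha
    · intro w₁ w₂ h1 h2
      simpa using add_mem h1 h2
  -- choose c with xe * (column i) = xe² * c i
  have hvmem : ∀ i : Fin n, ∀ j, (φ (Pi.single i 1)) j ∈ maximalIdeal R := by
    intro i j
    exact hcomp _ (hrange ⟨Pi.single i 1, rfl⟩) j
  have hvc : ∀ i : Fin n, ∀ j, ∃ r, xe * (φ (Pi.single i 1)) j = xe ^ 2 * r :=
    fun i j => hA _ (hvmem i j)
  choose c hc using hvc
  -- residues of the c i are linearly dependent since n > m
  set K := ResidueField R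
  have hdep : ¬ LinearIndependent K (fun i : Fin n => fun j : Fin m => residue R (c i j)) := by
    intro hli
    have hcard := hli.fintype_card_le_finrank
    rw [Module.finrank_pi K] at hcard
    simp only [Fintype.card_fin] at hcard
    omega
  obtain ⟨g, hg0, i0, hgi0⟩ := Fintype.not_linearIndependent_iff.mp hdep
  choose a ha using fun i => IsLocalRing.residue_surjective (R := R) (g i)
  -- the key sums lie in m
  have hsum : ∀ j, (∑ i, a i * c i j) ∈ maximalIdeal R := by
    intro j
    have h0 := congrFun hg0 j
    have : residue R (∑ i, a i * c i j) = 0 := by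
      rw [map_sum]
      simpa [ha] using h0
    exact Ideal.Quotient.eq_zero_iff_mem.mp this
  have haeq : a = ∑ i, a i • (Pi.single i 1 : Fin n → R) := by
    funext j
    simp [Finset.sum_apply, Pi.single_apply]
  refine ⟨φ a, ⟨a, rfl⟩, ?_, ?_⟩
  · intro h
    exact hgi0 (by rw [← ha i0]; exact Ideal.Quotient.eq_zero_iff_mem.mpr (hmu a h i0))
  · have hφa : φ a = ∑ i, a i • φ (Pi.single i 1) := by
      conv_lhs => rw [haeq]
      rw [map_sum]
      simp
    funext j
    rw [hφa]
    simp only [Pi.smul_apply, Finset.sum_apply, smul_eq_mul, Finset.mul_sum, Pi.zero_apply]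
    calc ∑ i, xe * (a i * (φ (Pi.single i 1)) j)
        = ∑ i, xe ^ 2 * (a i * c i j) := by
          refine Finset.sum_congr rfl fun i _ => ?_
          rw [mul_left_comm, hc i j, mul_left_comm]
      _ = xe ^ 2 * ∑ i, a i * c i j := by rw [Finset.mul_sum]
      _ = 0 := hsq _ (hsum j)
end

section
/- Let (R, m) be an Artinian local ring with m² principal, m² ≠ 0, and Gorenstein. Suppose char(R/m) ≠ 2 and R = S/I for a regular local ring (S, n) with I ⊆ n². If e = embdim(R) ≥ 2 and s is such that m^s = soc(R), then there is a minimal generating set x₁, …, x_e of m with x_i x_j = 0 for all i ≠ j and x₁^s = uᵢ xᵢ² for units uᵢ, for all i > 1. Consequently, for all i ≥ 2, m^i = (x₁^i). -/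
open IsLocalRing

section Helpers
set_option linter.unusedSectionVars false
set_option maxHeartbeats 1000000

variable {R : Type*} [CommRing R] [IsLocalRing R] [IsNoetherianRing R]



theorem two_ne_zero_res (hchar : ringChar (ResidueField R) ≠ 2) :
    (2 : ResidueField R) ≠ 0 := by
  intro h2
  haveI := (CharP.charP_iff_prime_eq_zero (p := 2) Nat.prime_two).mpr h2
  exact hchar (ringChar.eq _ 2)

theorem two_unit (hchar : ringChar (ResidueField R) ≠ 2) : IsUnit (2 : R) := by
  rw [← IsLocalRing.notMem_maximalIdeal]
  intro h
  apply two_ne_zero_res hchar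
  rw [show (2 : ResidueField R) = residue R 2 from (map_ofNat (residue R) 2).symm]
  exact (IsLocalRing.residue_eq_zero_iff (2:R)).mpr h

theorem ann_socle {s : ℕ}
    (hsoc : (maximalIdeal R) ^ s = Submodule.colon (⊥ : Ideal R) (maximalIdeal R)) :
    ∀ y ∈ (maximalIdeal R) ^ s, ∀ t ∈ maximalIdeal R, y * t = 0 := by
  intro y hy t ht
  rw [hsoc, Submodule.mem_colon] at hy
  have := hy t ht
  simpa using this

theorem s_ge_two {s : ℕ}
    (hm2 : (maximalIdeal R) ^ 2 ≠ ⊥)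
    (hsoc : (maximalIdeal R) ^ s = Submodule.colon (⊥ : Ideal R) (maximalIdeal R)) :
    2 ≤ s := by
  by_contra h
  push_neg at h
  apply hm2
  have h1 : (maximalIdeal R) ^ (s + 1) = ⊥ := by
    rw [eq_bot_iff, pow_succ, Ideal.mul_le]
    intro a ha b hb
    simpa using ann_socle hsoc a ha b hb
  have h2 : (maximalIdeal R) ^ 2 ≤ (maximalIdeal R) ^ (s+1) :=
    Ideal.pow_le_pow_right (by omega)
  rw [h1] at h2
  exact le_bot_iff.mp h2


theorem unit_eq_inv_mul {r a b : R} (hru : IsUnit r) (h : r * a = b) :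
    a = ↑hru.unit⁻¹ * b := by
  rw [← h, ← mul_assoc, IsUnit.val_inv_mul, one_mul]

theorem m_le_jac : maximalIdeal R ≤ Ideal.jacobson ⊥ := by
  rw [IsLocalRing.jacobson_eq_maximalIdeal ⊥ bot_ne_top]

theorem exists_x1 (h2 : IsUnit (2 : R))
    (hstretched : ((maximalIdeal R) ^ 2).IsPrincipal)
    (hm2 : (maximalIdeal R) ^ 2 ≠ ⊥) :
    ∃ x₁, x₁ ∈ maximalIdeal R ∧ x₁ ∉ (maximalIdeal R) ^ 2 ∧
      (maximalIdeal R) ^ 2 = Ideal.span {x₁ ^ 2} := by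
  have hm3 : (maximalIdeal R) ^ 3 = maximalIdeal R * (maximalIdeal R) ^ 2 := by ring
  have hy : ∃ y ∈ maximalIdeal R, y ^ 2 ∉ (maximalIdeal R) ^ 3 := by
    by_contra hc
    push_neg at hc
    have hle : (maximalIdeal R) ^ 2 ≤ maximalIdeal R • (maximalIdeal R) ^ 2 := by
      rw [smul_eq_mul, ← hm3, pow_two, Ideal.mul_le]
      intro r hr t ht
      have h1 : r * t = ↑h2.unit⁻¹ * (2 * (r * t)) := unit_eq_inv_mul h2 rfl
      have h2' : 2 * (r * t) = (r + t) ^ 2 - r ^ 2 - t ^ 2 := by ring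
      rw [h1, h2']
      exact Ideal.mul_mem_left _ _
        (sub_mem (sub_mem (hc _ (add_mem hr ht)) (hc _ hr)) (hc _ ht))
    exact hm2 (Submodule.eq_bot_of_le_smul_of_le_jacobson_bot (maximalIdeal R)
      ((maximalIdeal R) ^ 2) (IsNoetherian.noetherian _) hle m_le_jac)
  obtain ⟨y, hym, hy3⟩ := hy
  obtain ⟨w, hw⟩ := hstretched
  have hy2m2 : y ^ 2 ∈ (maximalIdeal R) ^ 2 := by
    rw [pow_two, pow_two]; exact Ideal.mul_mem_mul hym hym
  obtain ⟨r, hr⟩ := Ideal.mem_span_singleton'.mp (hw ▸ hy2m2)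
  have hrm : r ∉ maximalIdeal R := by
    intro hrm
    apply hy3
    rw [← hr, hm3, hw]
    exact Ideal.mul_mem_mul hrm (Ideal.mem_span_singleton_self w)
  have hru : IsUnit r := IsLocalRing.notMem_maximalIdeal.mp hrm
  refine ⟨y, hym, ?_, ?_⟩
  · intro hy2
    apply hy3
    have h4 : y ^ 2 ∈ (maximalIdeal R) ^ (2 + 2) := by
      rw [pow_add, pow_two y]; exact Ideal.mul_mem_mul hy2 hy2
    exact Ideal.pow_le_pow_right (by norm_num : (3:ℕ) ≤ 2 + 2) h4
  · refine le_antisymm ?_ ?_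
    · rw [hw, Ideal.submodule_span_eq, Ideal.span_le, Set.singleton_subset_iff]
      rw [show w = ↑hru.unit⁻¹ * y ^ 2 from unit_eq_inv_mul hru hr]
      exact Ideal.mem_span_singleton'.mpr ⟨_, rfl⟩
    · rw [Ideal.span_le, Set.singleton_subset_iff]
      exact hy2m2

theorem pows_eq {x₁ : R} (hx₁ : x₁ ∈ maximalIdeal R)
    (hsq : (maximalIdeal R) ^ 2 = Ideal.span {x₁ ^ 2}) :
    ∀ i, 2 ≤ i → (maximalIdeal R) ^ i = Ideal.span {x₁ ^ i} := by
  intro i hi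
  induction i, hi using Nat.le_induction with
  | base => exact hsq
  | succ i hi ih =>
    refine le_antisymm ?_ ?_
    · rw [pow_succ, Ideal.mul_le]
      intro a ha b hb
      rw [ih] at ha
      obtain ⟨c, hc⟩ := Ideal.mem_span_singleton'.mp ha
      have hbx : b * x₁ ∈ Ideal.span {x₁ ^ 2} := by
        rw [← hsq, pow_two]; exact Ideal.mul_mem_mul hb hx₁
      obtain ⟨d, hd⟩ := Ideal.mem_span_singleton'.mp hbx
      obtain ⟨j, rfl⟩ : ∃ j, i = j + 1 := ⟨i - 1, by omega⟩
      refine Ideal.mem_span_singleton'.mpr ⟨c * d, ?_⟩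
      have h5 : a * b = c * x₁ ^ j * (b * x₁) := by rw [← hc]; ring
      rw [h5, ← hd]; ring
    · rw [Ideal.span_le, Set.singleton_subset_iff]
      exact Ideal.pow_mem_pow hx₁ _

theorem socle_ann_iff {s : ℕ} {x₁ : R}
    (hsoc : (maximalIdeal R) ^ s = Submodule.colon (⊥ : Ideal R) (maximalIdeal R))
    (hsocne : Submodule.colon (⊥ : Ideal R) (maximalIdeal R) ≠ ⊥)
    (hspow : (maximalIdeal R) ^ s = Ideal.span {x₁ ^ s}) :
    ∀ c : R, c * x₁ ^ s = 0 ↔ c ∈ maximalIdeal R := by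
  have hx1s : x₁ ^ s ∈ (maximalIdeal R) ^ s := by
    rw [hspow]; exact Ideal.mem_span_singleton_self _
  have hne : x₁ ^ s ≠ 0 := by
    intro h
    apply hsocne
    rw [← hsoc, hspow, h, Ideal.span_singleton_eq_bot]
  intro c
  constructor
  · intro h
    by_contra hc
    have hcu : IsUnit c := IsLocalRing.notMem_maximalIdeal.mp hc
    exact hne ((unit_eq_inv_mul hcu h).trans (mul_zero _))
  · intro hc
    have hx1c : x₁ ^ s ∈ Submodule.colon (⊥ : Ideal R) (maximalIdeal R) := hsoc ▸ hx1s
    rw [Submodule.mem_colon] at hx1c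
    have h := hx1c c hc
    simpa [mul_comm] using h


theorem m_le_jac' : maximalIdeal R ≤ Ideal.jacobson ⊥ := by
  rw [IsLocalRing.jacobson_eq_maximalIdeal ⊥ bot_ne_top]

theorem span_from_classes {n : ℕ} {x₁ : R} (hx₁ : x₁ ∈ maximalIdeal R)
    (g : Fin n → R) (hg : ∀ i, g i ∈ maximalIdeal R)
    (hcl : ∀ t ∈ maximalIdeal R, ∃ (d : R) (cf : Fin n → R),
      t - (d * x₁ + ∑ i, cf i * g i) ∈ (maximalIdeal R) ^ 2) :
    Ideal.span ({x₁} ∪ Set.range g) = maximalIdeal R := by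
  apply le_antisymm
  · rw [Ideal.span_le]
    rintro t (rfl | ⟨i, rfl⟩)
    · exact hx₁
    · exact hg i
  · apply Submodule.le_of_le_smul_of_le_jacobson_bot (IsNoetherian.noetherian _) m_le_jac'
    intro t ht
    obtain ⟨d, cf, h⟩ := hcl t ht
    have hmem : d * x₁ + ∑ i, cf i * g i ∈ Ideal.span ({x₁} ∪ Set.range g) := by
      apply add_mem
      · exact Ideal.mul_mem_left _ _ (Ideal.subset_span (Or.inl rfl))
      · exact sum_mem fun i _ =>
          Ideal.mul_mem_left _ _ (Ideal.subset_span (Or.inr ⟨i, rfl⟩))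
    have hm2 : t - (d * x₁ + ∑ i, cf i * g i) ∈
        maximalIdeal R • (maximalIdeal R : Ideal R) := by
      rwa [smul_eq_mul, ← pow_two]
    have := Submodule.add_mem_sup hmem hm2
    simpa using this

theorem ann_from_gens {n : ℕ} {x₁ r : R} {g : Fin n → R}
    (hspan : Ideal.span ({x₁} ∪ Set.range g) = maximalIdeal R)
    (h0 : r * x₁ = 0) (hz : ∀ i, r * g i = 0) :
    ∀ t ∈ maximalIdeal R, r * t = 0 := by
  intro t ht
  rw [← hspan] at ht
  induction ht using Submodule.span_induction with
  | mem u hu =>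
    rcases hu with rfl | ⟨i, rfl⟩
    · exact h0
    · exact hz i
  | zero => simp
  | add u v _ _ hu hv => rw [mul_add, hu, hv, add_zero]
  | smul a u _ hu => rw [smul_eq_mul, ← mul_assoc, mul_comm r a, mul_assoc, hu, mul_zero]

theorem toCotangent_sum {n : ℕ} (A g : Fin n → R) (hg : ∀ i, g i ∈ maximalIdeal R)
    (h : ∑ i, A i * g i ∈ maximalIdeal R) :
    (maximalIdeal R).toCotangent ⟨∑ i, A i * g i, h⟩
      = ∑ i, A i • (maximalIdeal R).toCotangent ⟨g i, hg i⟩ := by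
  have h1 : (⟨∑ i, A i * g i, h⟩ : ↥(maximalIdeal R)) = ∑ i, A i • ⟨g i, hg i⟩ := by
    ext
    rw [AddSubmonoidClass.coe_finset_sum]
    simp [smul_eq_mul]
  rw [h1, map_sum]
  simp only [map_smul]

theorem mkQ_Rsmul (K : Submodule (ResidueField R) (CotangentSpace R)) (a : R)
    (v : CotangentSpace R) :
    K.mkQ (a • v) = residue R a • K.mkQ v := by
  rw [← IsLocalRing.ResidueField.algebraMap_eq, ← map_smul,
    algebraMap_smul (ResidueField R) a v]

theorem Rsmul_res (a : R) (v : CotangentSpace R) : a • v = residue R a • v := by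
  rw [← IsLocalRing.ResidueField.algebraMap_eq, algebraMap_smul]

theorem sally_main (hstretched : ((maximalIdeal R) ^ 2).IsPrincipal)
    (hm2 : (maximalIdeal R) ^ 2 ≠ ⊥)
    (hsocne : Submodule.colon (⊥ : Ideal R) (maximalIdeal R) ≠ ⊥)
    (hchar : ringChar (ResidueField R) ≠ 2)
    (e : ℕ)
    (hembdim : e = Module.finrank (ResidueField R) (CotangentSpace R))
    (he : 2 ≤ e) (s : ℕ)
    (hsoc : (maximalIdeal R) ^ s = Submodule.colon (⊥ : Ideal R) (maximalIdeal R)) :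
    ∃ x : Fin e → R,
      Ideal.span (Set.range x) = maximalIdeal R ∧
      (∀ a : Fin e → R, (∑ i, a i * x i) ∈ (maximalIdeal R) ^ 2 →
        ∀ i, a i ∈ maximalIdeal R) ∧
      (∀ i j, i ≠ j → x i * x j = 0) ∧
      (∀ i : Fin e, i ≠ ⟨0, by omega⟩ →
        ∃ u : Rˣ, x ⟨0, by omega⟩ ^ s = (u : R) * x i ^ 2) ∧
      (∀ i : ℕ, 2 ≤ i → (maximalIdeal R) ^ i = Ideal.span {x ⟨0, by omega⟩ ^ i}) := by
  obtain ⟨e', rfl⟩ : ∃ e', e = e' + 1 := ⟨e - 1, by omega⟩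
  have h2 : IsUnit (2 : R) := two_unit hchar
  have hs2 : 2 ≤ s := s_ge_two hm2 hsoc
  obtain ⟨x₁, hx₁m, hx₁m2, hsq⟩ := exists_x1 h2 hstretched hm2
  have hpow : ∀ i, 2 ≤ i → (maximalIdeal R) ^ i = Ideal.span {x₁ ^ i} :=
    pows_eq hx₁m hsq
  have hker : ∀ c : R, c * x₁ ^ s = 0 ↔ c ∈ maximalIdeal R :=
    socle_ann_iff hsoc hsocne (hpow s hs2)
  set v₁ : CotangentSpace R := (maximalIdeal R).toCotangent ⟨x₁, hx₁m⟩ with hv₁def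
  have hv₁ : v₁ ≠ 0 := by
    rw [hv₁def, Ne, Ideal.toCotangent_eq_zero]; exact hx₁m2
  set K : Submodule (ResidueField R) (CotangentSpace R) :=
    Submodule.span (ResidueField R) {v₁} with hK
  have hfrW : Module.finrank (ResidueField R) (CotangentSpace R ⧸ K) = e' := by
    have h1 := Submodule.finrank_quotient_add_finrank K
    have hK1 : Module.finrank (ResidueField R) ↥K = 1 := by
      rw [hK]; exact finrank_span_singleton hv₁
    rw [hK1] at h1
    omega
  let w : Module.Basis (Fin e') (ResidueField R) (CotangentSpace R ⧸ K) :=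
    Module.finBasisOfFinrankEq _ _ hfrW
  have hmkz : K.mkQ v₁ = 0 :=
    (Submodule.Quotient.mk_eq_zero K).mpr (Submodule.mem_span_singleton_self v₁)
  have hyex : ∀ i : Fin e', ∃ t : ↥(maximalIdeal R),
      K.mkQ ((maximalIdeal R).toCotangent t) = w i := by
    intro i
    obtain ⟨vt, hvt⟩ := K.mkQ_surjective (w i)
    obtain ⟨t, ht⟩ := (maximalIdeal R).toCotangent_surjective vt
    exact ⟨t, by rw [ht, hvt]⟩
  choose y hy using hyex
  have hyx2 : ∀ i, (y i : R) * x₁ ∈ Ideal.span {x₁ ^ 2} := fun i => by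
    rw [← hsq, pow_two]; exact Ideal.mul_mem_mul (y i).2 hx₁m
  choose α hα using fun i => Ideal.mem_span_singleton'.mp (hyx2 i)
  set z : Fin e' → R := fun i => (y i : R) - α i * x₁ with hzdef
  have hzm : ∀ i, z i ∈ maximalIdeal R := fun i =>
    sub_mem (y i).2 (Ideal.mul_mem_left _ _ hx₁m)
  have hzx : ∀ i, z i * x₁ = 0 := by
    intro i
    have h3 : z i * x₁ = (y i : R) * x₁ - α i * x₁ ^ 2 := by rw [hzdef]; ring
    rw [h3, ← hα, sub_self]
  have hzw : ∀ i, K.mkQ ((maximalIdeal R).toCotangent ⟨z i, hzm i⟩) = w i := by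
    intro i
    have hsub : (⟨z i, hzm i⟩ : ↥(maximalIdeal R)) = y i - α i • ⟨x₁, hx₁m⟩ := by
      ext; simp [hzdef, smul_eq_mul]
    rw [hsub, map_sub, map_smul, map_sub, mkQ_Rsmul, hy, ← hv₁def, hmkz, smul_zero,
      sub_zero]
  have hclz : ∀ t, t ∈ maximalIdeal R → ∃ (d : R) (cf : Fin e' → R),
      t - (d * x₁ + ∑ i, cf i * z i) ∈ (maximalIdeal R) ^ 2 := by
    intro t ht
    set u := K.mkQ ((maximalIdeal R).toCotangent ⟨t, ht⟩) with hu
    choose cf hcf using fun i => residue_surjective (R := R) (w.repr u i)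
    have hsum : ∑ i, cf i * z i ∈ maximalIdeal R :=
      sum_mem fun i _ => Ideal.mul_mem_left _ _ (hzm i)
    have hdiff : t - ∑ i, cf i * z i ∈ maximalIdeal R := sub_mem ht hsum
    have hq : K.mkQ ((maximalIdeal R).toCotangent ⟨t - ∑ i, cf i * z i, hdiff⟩) = 0 := by
      have hsplit : (⟨t - ∑ i, cf i * z i, hdiff⟩ : ↥(maximalIdeal R))
          = ⟨t, ht⟩ - ⟨∑ i, cf i * z i, hsum⟩ := by ext; simp
      rw [hsplit, map_sub, map_sub, toCotangent_sum cf z hzm hsum, map_sum]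
      have hterm : ∀ i ∈ Finset.univ, K.mkQ (cf i • (maximalIdeal R).toCotangent ⟨z i, hzm i⟩)
          = w.repr u i • w i := by
        intro i _
        rw [mkQ_Rsmul, hzw, hcf]
      rw [Finset.sum_congr rfl hterm, Module.Basis.sum_repr, ← hu, sub_self]
    have hmem : (maximalIdeal R).toCotangent ⟨t - ∑ i, cf i * z i, hdiff⟩ ∈ K :=
      (Submodule.Quotient.mk_eq_zero K).mp hq
    rw [hK, Submodule.mem_span_singleton] at hmem
    obtain ⟨dk, hdk⟩ := hmem
    obtain ⟨d, hd⟩ := residue_surjective (R := R) dk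
    refine ⟨d, cf, ?_⟩
    have hz2 : t - ∑ i, cf i * z i - d * x₁ ∈ maximalIdeal R :=
      sub_mem hdiff (Ideal.mul_mem_left _ _ hx₁m)
    have hzero : (maximalIdeal R).toCotangent ⟨t - ∑ i, cf i * z i - d * x₁, hz2⟩ = 0 := by
      have hsplit : (⟨t - ∑ i, cf i * z i - d * x₁, hz2⟩ : ↥(maximalIdeal R))
          = ⟨t - ∑ i, cf i * z i, hdiff⟩ - d • ⟨x₁, hx₁m⟩ := by
        ext; simp [smul_eq_mul]
      rw [hsplit, map_sub, map_smul, ← hdk, ← hv₁def, Rsmul_res, hd, sub_self]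
    have hfin := (Ideal.toCotangent_eq_zero _ _).mp hzero
    rw [show t - (d * x₁ + ∑ i, cf i * z i) = t - ∑ i, cf i * z i - d * x₁ from by ring]
    exact hfin
  have hspanz : Ideal.span ({x₁} ∪ Set.range z) = maximalIdeal R :=
    span_from_classes hx₁m z hzm hclz
  have hzz : ∀ i j, z i * z j ∈ Ideal.span {x₁ ^ s} := by
    intro i j
    have hzz2 : z i * z j ∈ Ideal.span {x₁ ^ 2} := by
      rw [← hsq, pow_two]; exact Ideal.mul_mem_mul (hzm i) (hzm j)
    obtain ⟨β, hβ⟩ := Ideal.mem_span_singleton'.mp hzz2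
    have hxx : z i * z j * x₁ = 0 := by
      calc z i * z j * x₁ = z j * (z i * x₁) := by ring
        _ = 0 := by rw [hzx i, mul_zero]
    have hzk : ∀ l, z i * z j * z l = 0 := by
      intro l
      have hstep : z i * z j * z l = β * x₁ * (z l * x₁) := by rw [← hβ]; ring
      rw [hstep, hzx l, mul_zero]
    have hann := ann_from_gens hspanz hxx hzk
    have hcol : z i * z j ∈ Submodule.colon (⊥ : Ideal R) (maximalIdeal R) := by
      rw [Submodule.mem_colon]
      intro p hp
      simp [smul_eq_mul, hann p hp]
    rw [← hsoc, hpow s hs2] at hcol; exact hcol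
  choose c hc using fun i j => Ideal.mem_span_singleton'.mp (hzz i j)
  set C : Matrix (Fin e') (Fin e') (ResidueField R) :=
    Matrix.of fun i j => residue R (c i j) with hCdef
  have hCapp : ∀ i j, C i j = residue R (c i j) := fun i j => rfl
  have hCsymm : ∀ i j, C i j = C j i := by
    intro i j
    have hzero : (c i j - c j i) * x₁ ^ s = 0 := by
      rw [sub_mul, hc, hc, mul_comm (z i) (z j), sub_self]
    have hm := (hker _).mp hzero
    have := (IsLocalRing.residue_eq_zero_iff _).mpr hm
    rw [map_sub, sub_eq_zero] at this
    rw [hCapp, hCapp, this]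
  have hnd : ∀ a : Fin e' → ResidueField R, (∀ j, ∑ i, a i * C i j = 0) → a = 0 := by
    intro a ha
    choose A hA using fun i => residue_surjective (R := R) (a i)
    have hAx : (∑ i, A i * z i) * x₁ = 0 := by
      rw [Finset.sum_mul]
      apply Finset.sum_eq_zero
      intro i _
      rw [mul_assoc, hzx i, mul_zero]
    have hAz : ∀ j, (∑ i, A i * z i) * z j = 0 := by
      intro j
      have hstep : (∑ i, A i * z i) * z j = (∑ i, A i * c i j) * x₁ ^ s := by
        rw [Finset.sum_mul, Finset.sum_mul]
        apply Finset.sum_congr rfl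
        intro i _
        rw [mul_assoc, ← hc i j]; ring
      rw [hstep]
      apply (hker _).mpr
      rw [← IsLocalRing.residue_eq_zero_iff, map_sum]
      have : ∀ i ∈ Finset.univ, residue R (A i * c i j) = a i * C i j := by
        intro i _
        rw [map_mul, hA, hCapp]
      rw [Finset.sum_congr rfl this]
      exact ha j
    have hsum : ∑ i, A i * z i ∈ maximalIdeal R :=
      sum_mem fun i _ => Ideal.mul_mem_left _ _ (hzm i)
    have hy2 : (∑ i, A i * z i) ∈ (maximalIdeal R) ^ 2 := by
      have hann := ann_from_gens hspanz hAx hAz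
      have hcol : (∑ i, A i * z i) ∈ Submodule.colon (⊥ : Ideal R) (maximalIdeal R) := by
        rw [Submodule.mem_colon]
        intro p hp
        simp [smul_eq_mul, hann p hp]
      rw [← hsoc] at hcol
      exact Ideal.pow_le_pow_right hs2 hcol
    have h0 : (maximalIdeal R).toCotangent ⟨∑ i, A i * z i, hsum⟩ = 0 :=
      (Ideal.toCotangent_eq_zero _ _).mpr hy2
    rw [toCotangent_sum A z hzm hsum] at h0
    have h0' := congrArg K.mkQ h0
    rw [map_sum, map_zero] at h0'
    have hterm : ∀ i ∈ Finset.univ,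
        K.mkQ (A i • (maximalIdeal R).toCotangent ⟨z i, hzm i⟩) = a i • w i := by
      intro i _
      rw [mkQ_Rsmul, hzw, hA]
    rw [Finset.sum_congr rfl hterm] at h0'
    funext i
    exact Fintype.linearIndependent_iff.mp w.linearIndependent a h0' i
  haveI : Invertible (2 : ResidueField R) := invertibleOfNonzero (two_ne_zero_res hchar)
  set B := Matrix.toBilin' C with hBdef
  have hBapp : ∀ xx yy : Fin e' → ResidueField R,
      B xx yy = ∑ i, ∑ j, xx i * C i j * yy j := fun xx yy => Matrix.toBilin'_apply C xx yy
  have hBsymm : LinearMap.IsSymm B := by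
    refine LinearMap.isSymm_def.mpr ?_
    intro xx yy
    rw [RingHom.id_apply, hBapp, hBapp, Finset.sum_comm]
    apply Finset.sum_congr rfl
    intro i _
    apply Finset.sum_congr rfl
    intro j _
    rw [hCsymm j i]; ring
  obtain ⟨v0, hv0⟩ := LinearMap.BilinForm.exists_orthogonal_basis hBsymm
  let ε : Fin (Module.finrank (ResidueField R) (Fin e' → ResidueField R)) ≃ Fin e' :=
    finCongr (Module.finrank_fin_fun (ResidueField R))
  let v : Module.Basis (Fin e') (ResidueField R) (Fin e' → ResidueField R) := v0.reindex ε
  have hvdef : ∀ i, v i = v0 (ε.symm i) := fun i => v0.reindex_apply ε i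
  have hortho : ∀ i j, i ≠ j → B (v i) (v j) = 0 := by
    intro i j hij
    rw [hvdef, hvdef]
    exact hv0 (fun h => hij (by simpa using congrArg ε h))
  have hBv : ∀ a : Fin e' → ResidueField R, (∀ xx, B a xx = 0) → a = 0 := by
    intro a h
    apply hnd
    intro j
    have hh := h (Pi.single j 1)
    rw [hBapp] at hh
    have hrw : ∀ i ∈ Finset.univ,
        (∑ l, a i * C i l * Pi.single (M := fun _ => ResidueField R) j 1 l) = a i * C i j := by
      intro i _
      rw [Finset.sum_eq_single j]
      · simp
      · intro b _ hb; simp [Pi.single_apply, hb]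
      · intro hj; exact absurd (Finset.mem_univ j) hj
    rwa [Finset.sum_congr rfl hrw] at hh
  have hdiagnz : ∀ i, B (v i) (v i) ≠ 0 := by
    intro i h0
    have hall : ∀ xx, B (v i) xx = 0 := by
      intro xx
      have hx := Module.Basis.sum_repr v xx
      rw [← hx, map_sum]
      apply Finset.sum_eq_zero
      intro j _
      rw [map_smul]
      rcases eq_or_ne i j with rfl | hij
      · rw [h0, smul_zero]
      · rw [hortho i j hij, smul_zero]
    exact v.ne_zero i (hBv _ hall)
  choose Ph hPh using fun (a : Fin e') (i : Fin e') => residue_surjective (R := R) (v i a)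
  set x' : Fin e' → R := fun i => ∑ a, Ph a i * z a with hx'def
  have hx'm : ∀ i, x' i ∈ maximalIdeal R := fun i =>
    sum_mem fun a _ => Ideal.mul_mem_left _ _ (hzm a)
  have hx'x : ∀ i, x' i * x₁ = 0 := by
    intro i
    rw [hx'def, Finset.sum_mul]
    apply Finset.sum_eq_zero
    intro a _
    rw [mul_assoc, hzx a, mul_zero]
  have hx'prod : ∀ i j, x' i * x' j = (∑ a, ∑ b, Ph a i * Ph b j * c a b) * x₁ ^ s := by
    intro i j
    rw [hx'def, Finset.sum_mul_sum, Finset.sum_mul]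
    apply Finset.sum_congr rfl
    intro a _
    rw [Finset.sum_mul]
    apply Finset.sum_congr rfl
    intro b _
    rw [mul_assoc (Ph a i * Ph b j) (c a b) (x₁ ^ s), hc a b]
    ring
  have hres : ∀ i j, residue R (∑ a, ∑ b, Ph a i * Ph b j * c a b) = B (v i) (v j) := by
    intro i j
    rw [map_sum, hBapp]
    apply Finset.sum_congr rfl
    intro a _
    rw [map_sum]
    apply Finset.sum_congr rfl
    intro b _
    rw [map_mul, map_mul, hPh, hPh, hCapp]
    ring
  have horthoR : ∀ i j, i ≠ j → x' i * x' j = 0 := by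
    intro i j hij
    rw [hx'prod]
    apply (hker _).mpr
    rw [← IsLocalRing.residue_eq_zero_iff, hres]
    exact hortho i j hij
  have hunit : ∀ i, ∃ u : Rˣ, x₁ ^ s = (u : R) * x' i ^ 2 := by
    intro i
    have hcu : IsUnit (∑ a, ∑ b, Ph a i * Ph b i * c a b) := by
      rw [← IsLocalRing.residue_ne_zero_iff_isUnit, hres]
      exact hdiagnz i
    have heq : (∑ a, ∑ b, Ph a i * Ph b i * c a b) * x₁ ^ s = x' i ^ 2 := by
      rw [pow_two, hx'prod]
    exact ⟨hcu.unit⁻¹, unit_eq_inv_mul hcu heq⟩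
  have hx'w : ∀ i, K.mkQ ((maximalIdeal R).toCotangent ⟨x' i, hx'm i⟩)
      = ∑ a, v i a • w a := by
    intro i
    have hxi : x' i = ∑ a, Ph a i * z a := rfl
    have hco : (⟨x' i, hx'm i⟩ : ↥(maximalIdeal R))
        = ⟨∑ a, Ph a i * z a, by rw [← hxi]; exact hx'm i⟩ := by ext; exact hxi
    rw [hco, toCotangent_sum (fun a => Ph a i) z hzm, map_sum]
    apply Finset.sum_congr rfl
    intro a _
    rw [mkQ_Rsmul, hzw, hPh]
  have hclx : ∀ t, t ∈ maximalIdeal R → ∃ (d : R) (cf : Fin e' → R),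
      t - (d * x₁ + ∑ i, cf i * x' i) ∈ (maximalIdeal R) ^ 2 := by
    intro t ht
    set u := K.mkQ ((maximalIdeal R).toCotangent ⟨t, ht⟩) with hu
    set γ : Fin e' → ResidueField R := fun a => w.repr u a with hγdef
    set dc : Fin e' → ResidueField R := fun i => v.repr γ i with hdcdef
    have hγ : ∑ i, dc i • v i = γ := Module.Basis.sum_repr v γ
    choose cf hcf using fun i => residue_surjective (R := R) (dc i)
    have hsum : ∑ i, cf i * x' i ∈ maximalIdeal R :=
      sum_mem fun i _ => Ideal.mul_mem_left _ _ (hx'm i)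
    have hdiff : t - ∑ i, cf i * x' i ∈ maximalIdeal R := sub_mem ht hsum
    have hq : K.mkQ ((maximalIdeal R).toCotangent ⟨t - ∑ i, cf i * x' i, hdiff⟩) = 0 := by
      have hsplit : (⟨t - ∑ i, cf i * x' i, hdiff⟩ : ↥(maximalIdeal R))
          = ⟨t, ht⟩ - ⟨∑ i, cf i * x' i, hsum⟩ := by ext; simp
      rw [hsplit, map_sub, map_sub, toCotangent_sum cf x' hx'm hsum, map_sum]
      have hterm : ∀ i ∈ Finset.univ,
          K.mkQ (cf i • (maximalIdeal R).toCotangent ⟨x' i, hx'm i⟩)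
          = ∑ a, (dc i * v i a) • w a := by
        intro i _
        rw [mkQ_Rsmul, hx'w, hcf, Finset.smul_sum]
        apply Finset.sum_congr rfl
        intro a _
        rw [smul_smul]
      rw [Finset.sum_congr rfl hterm, Finset.sum_comm]
      have hcoord : ∀ a ∈ Finset.univ, (∑ i, (dc i * v i a) • w a) = γ a • w a := by
        intro a _
        rw [← Finset.sum_smul]
        congr 1
        have hga := congrFun hγ a
        rw [Finset.sum_apply] at hga
        simpa [Pi.smul_apply, smul_eq_mul] using hga
      rw [Finset.sum_congr rfl hcoord,
        show (∑ a, γ a • w a) = u from Module.Basis.sum_repr w u, ← hu]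
      exact sub_self u
    have hmem : (maximalIdeal R).toCotangent ⟨t - ∑ i, cf i * x' i, hdiff⟩ ∈ K :=
      (Submodule.Quotient.mk_eq_zero K).mp hq
    rw [hK, Submodule.mem_span_singleton] at hmem
    obtain ⟨dk, hdk⟩ := hmem
    obtain ⟨d, hd⟩ := residue_surjective (R := R) dk
    refine ⟨d, cf, ?_⟩
    have hz2 : t - ∑ i, cf i * x' i - d * x₁ ∈ maximalIdeal R :=
      sub_mem hdiff (Ideal.mul_mem_left _ _ hx₁m)
    have hzero : (maximalIdeal R).toCotangent ⟨t - ∑ i, cf i * x' i - d * x₁, hz2⟩ = 0 := by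
      have hsplit : (⟨t - ∑ i, cf i * x' i - d * x₁, hz2⟩ : ↥(maximalIdeal R))
          = ⟨t - ∑ i, cf i * x' i, hdiff⟩ - d • ⟨x₁, hx₁m⟩ := by
        ext; simp [smul_eq_mul]
      rw [hsplit, map_sub, map_smul, ← hdk, ← hv₁def, Rsmul_res, hd, sub_self]
    have hfin := (Ideal.toCotangent_eq_zero _ _).mp hzero
    rw [show t - (d * x₁ + ∑ i, cf i * x' i) = t - ∑ i, cf i * x' i - d * x₁ from by ring]
    exact hfin
  have hspanx : Ideal.span ({x₁} ∪ Set.range x') = maximalIdeal R :=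
    span_from_classes hx₁m x' hx'm hclx
  refine ⟨Fin.cons x₁ x', ?_, ?_, ?_, ?_, ?_⟩
  · rw [Fin.range_cons, Set.insert_eq, hspanx]
  · intro a ha
    rw [Fin.sum_univ_succ] at ha
    simp only [Fin.cons_zero, Fin.cons_succ] at ha
    have hsum2 : ∑ i, a i.succ * x' i ∈ maximalIdeal R :=
      sum_mem fun i _ => Ideal.mul_mem_left _ _ (hx'm i)
    have hTm : a 0 * x₁ + ∑ i, a i.succ * x' i ∈ maximalIdeal R :=
      add_mem (Ideal.mul_mem_left _ _ hx₁m) hsum2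
    have h0 : (maximalIdeal R).toCotangent ⟨a 0 * x₁ + ∑ i, a i.succ * x' i, hTm⟩ = 0 :=
      (Ideal.toCotangent_eq_zero _ _).mpr ha
    have hsplit : (⟨a 0 * x₁ + ∑ i, a i.succ * x' i, hTm⟩ : ↥(maximalIdeal R))
        = a 0 • ⟨x₁, hx₁m⟩ + ⟨∑ i, a i.succ * x' i, hsum2⟩ := by
      ext; simp [smul_eq_mul]
    rw [hsplit, map_add, map_smul,
      toCotangent_sum (fun i => a i.succ) x' hx'm hsum2] at h0
    have h0' := congrArg K.mkQ h0
    rw [map_zero, map_add, mkQ_Rsmul, ← hv₁def, hmkz, smul_zero, zero_add, map_sum] at h0'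
    have hterm : ∀ i ∈ Finset.univ,
        K.mkQ (a i.succ • (maximalIdeal R).toCotangent ⟨x' i, hx'm i⟩)
        = ∑ b, (residue R (a i.succ) * v i b) • w b := by
      intro i _
      rw [mkQ_Rsmul, hx'w, Finset.smul_sum]
      apply Finset.sum_congr rfl
      intro b _
      rw [smul_smul]
    rw [Finset.sum_congr rfl hterm, Finset.sum_comm] at h0'
    have hcoord : ∀ b ∈ Finset.univ, (∑ i, (residue R (a i.succ) * v i b) • w b)
        = (∑ i, residue R (a i.succ) * v i b) • w b := by
      intro b _
      rw [Finset.sum_smul]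
    rw [Finset.sum_congr rfl hcoord] at h0'
    have hwind := Fintype.linearIndependent_iff.mp w.linearIndependent
      (fun b => ∑ i, residue R (a i.succ) * v i b) h0'
    have hvsum : ∑ i, residue R (a i.succ) • v i = 0 := by
      funext b
      rw [Finset.sum_apply]
      simpa [Pi.smul_apply, smul_eq_mul] using hwind b
    have hsucc : ∀ i : Fin e', a i.succ ∈ maximalIdeal R := by
      intro i
      rw [← IsLocalRing.residue_eq_zero_iff]
      exact Fintype.linearIndependent_iff.mp v.linearIndependent _ hvsum i
    have hzer : ∀ i ∈ Finset.univ,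
        a i.succ • (maximalIdeal R).toCotangent ⟨x' i, hx'm i⟩ = 0 := by
      intro i _
      exact Ideal.Cotangent.smul_eq_zero_of_mem (hsucc i) _
    rw [Finset.sum_congr rfl hzer, Finset.sum_const_zero, add_zero] at h0
    have ha0 : a 0 ∈ maximalIdeal R := by
      rw [← IsLocalRing.residue_eq_zero_iff]
      have := h0
      rw [Rsmul_res, ← hv₁def] at this
      rcases smul_eq_zero.mp this with h | h
      · exact h
      · exact absurd h hv₁
    intro i
    rcases Fin.eq_zero_or_eq_succ i with rfl | ⟨j, rfl⟩
    · exact ha0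
    · exact hsucc j
  · intro i j hij
    rcases Fin.eq_zero_or_eq_succ i with rfl | ⟨i', rfl⟩ <;>
      rcases Fin.eq_zero_or_eq_succ j with rfl | ⟨j', rfl⟩
    · exact absurd rfl hij
    · simp only [Fin.cons_zero, Fin.cons_succ]
      rw [mul_comm]
      exact hx'x j'
    · simp only [Fin.cons_zero, Fin.cons_succ]
      exact hx'x i'
    · simp only [Fin.cons_succ]
      refine horthoR i' j' (fun h => hij ?_)
      rw [h]
  · intro i hi
    have h00 : (⟨0, by omega⟩ : Fin (e' + 1)) = 0 := by
      apply Fin.ext; simp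
    rw [h00] at hi ⊢
    rcases Fin.eq_zero_or_eq_succ i with rfl | ⟨j, rfl⟩
    · exact absurd rfl hi
    · rw [Fin.cons_zero, Fin.cons_succ]
      exact hunit j
  · intro i hi
    have h00 : (⟨0, by omega⟩ : Fin (e' + 1)) = 0 := by
      apply Fin.ext; simp
    rw [h00, Fin.cons_zero]
    exact hpow i hi







end Helpers

/-- Sally's structure theorem for Artinian stretched Gorenstein rings
(Theorem 4.2 together with Remark 4.3): let `(S, n)` be a regular Noetherian local ring
(regularity expressed as `embdim S = Krull dimension of S`), `I ⊆ n²` an ideal, and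
`R = S/I`.  Assume `R` is Artinian with `m²` principal and nonzero (stretched),
Gorenstein (the socle `(0 :_R m)` is a nonzero principal ideal), `char(R/m) ≠ 2`,
`e = embdim R ≥ 2`, and `m^s = soc R`.  Then there is a minimal generating set
`x₀, …, x_{e-1}` of `m` with `xᵢ xⱼ = 0` for `i ≠ j` and `x₀^s = uᵢ xᵢ²` for units `uᵢ`
(for all `i ≠ 0`); consequently `m^i = (x₀^i)` for all `i ≥ 2`. -/
theorem stretched_gorenstein_structure {S : Type*} [CommRing S]
    [IsNoetherianRing S] [IsLocalRing S]
    (hreg : ringKrullDim S =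
      Module.finrank (ResidueField S) (CotangentSpace S))
    (I : Ideal S) (hI : I ≤ (maximalIdeal S) ^ 2)
    [IsArtinianRing (S ⧸ I)] [IsLocalRing (S ⧸ I)]
    (hstretched : ((maximalIdeal (S ⧸ I)) ^ 2).IsPrincipal)
    (hm2 : (maximalIdeal (S ⧸ I)) ^ 2 ≠ ⊥)
    (hgorenstein :
      (Submodule.colon (⊥ : Ideal (S ⧸ I)) (maximalIdeal (S ⧸ I))).IsPrincipal ∧
      Submodule.colon (⊥ : Ideal (S ⧸ I)) (maximalIdeal (S ⧸ I)) ≠ ⊥)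
    (hchar : ringChar (ResidueField (S ⧸ I)) ≠ 2)
    (e : ℕ)
    (hembdim : e = Module.finrank (ResidueField (S ⧸ I)) (CotangentSpace (S ⧸ I)))
    (he : 2 ≤ e)
    (s : ℕ)
    (hsoc : (maximalIdeal (S ⧸ I)) ^ s =
      Submodule.colon (⊥ : Ideal (S ⧸ I)) (maximalIdeal (S ⧸ I))) :
    ∃ x : Fin e → (S ⧸ I),
      Ideal.span (Set.range x) = maximalIdeal (S ⧸ I) ∧
      (∀ a : Fin e → (S ⧸ I),
        (∑ i, a i * x i) ∈ (maximalIdeal (S ⧸ I)) ^ 2 →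
          ∀ i, a i ∈ maximalIdeal (S ⧸ I)) ∧
      (∀ i j, i ≠ j → x i * x j = 0) ∧
      (∀ i : Fin e, i ≠ ⟨0, by omega⟩ →
        ∃ u : (S ⧸ I)ˣ, x ⟨0, by omega⟩ ^ s = (u : S ⧸ I) * x i ^ 2) ∧
      (∀ i : ℕ, 2 ≤ i →
        (maximalIdeal (S ⧸ I)) ^ i = Ideal.span {x ⟨0, by omega⟩ ^ i}) := by
  haveI : IsNoetherianRing (S ⧸ I) := inferInstance
  exact sally_main hstretched hm2 hgorenstein.2 hchar e hembdim he s hsoc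
end

section
/- Let R = k[x,y]/(xy) with k a field and M = R/(x). Then Ω₁(M) = (y), and the minimal free resolution of M over R is ⋯ → R →^{x} R →^{y} R →^{x} R → M → 0, so I_{n,1}(M) = (x) if n is odd and (y) if n is even. In particular, the ideals of minors are 2-periodic but not eventually equal to m = (x,y). -/
open MvPolynomial

/-- Let `R = k[x,y]/(xy)` and `M = R/(x)`. Then `Ω₁(M) = (y)` and the minimal free
resolution of `M` over `R` is `⋯ → R →^{x} R →^{y} R →^{x} R → M → 0`: the `n`-th
differential (a `1 × 1` matrix) is multiplication by `d n`, with `d n = x` for odd `n`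
and `d n = y` for even `n`.  This is expressed by: each `d n` is a nonunit (minimality),
the kernel of the augmentation `R → M = R/(x)` is the set of multiples of `d 1 = x`,
and the kernel of multiplication by `d n` is the set of multiples of `d (n+1)`
(exactness).  Hence `I_{n,1}(M) = (x)` for odd `n` and `(y)` for even `n`; these are
2-periodic but never equal to the maximal ideal `m = (x, y)`. -/
theorem ideals_of_minors_over_kxy_mod_xy (k : Type*) [Field k] :
    let R := MvPolynomial (Fin 2) k ⧸
      Ideal.span {(MvPolynomial.X 0 * MvPolynomial.X 1 : MvPolynomial (Fin 2) k)}
    let x : R := Ideal.Quotient.mk _ (MvPolynomial.X 0)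
    let y : R := Ideal.Quotient.mk _ (MvPolynomial.X 1)
    let d : ℕ → R := fun n => if Odd n then x else y
    (∀ n, 1 ≤ n → ¬ IsUnit (d n)) ∧
    (∀ r : R, Ideal.Quotient.mk (Ideal.span {x}) r = 0 ↔ ∃ s, r = d 1 * s) ∧
    (∀ n, 1 ≤ n → ∀ r : R, d n * r = 0 ↔ ∃ s, r = d (n + 1) * s) ∧
    (∀ n, 1 ≤ n → Odd n → Ideal.span {d n} = Ideal.span {x}) ∧
    (∀ n, 1 ≤ n → Even n → Ideal.span {d n} = Ideal.span {y}) ∧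
    Ideal.span {x} ≠ (Ideal.span {x, y} : Ideal R) ∧
    Ideal.span {y} ≠ (Ideal.span {x, y} : Ideal R) := by
  intro R x y d
  set P := MvPolynomial (Fin 2) k with hP
  set I : Ideal P := Ideal.span {(X 0 * X 1 : P)} with hI
  have hX0 : (X 0 : P) ≠ 0 := X_ne_zero 0
  have hX1 : (X 1 : P) ≠ 0 := X_ne_zero 1
  have hxy : x * y = 0 := by
    show Ideal.Quotient.mk I (X 0) * Ideal.Quotient.mk I (X 1) = 0
    rw [← map_mul, Ideal.Quotient.eq_zero_iff_mem]
    exact Ideal.subset_span rfl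
  -- evaluation at 0 kills x and y
  have hIev : ∀ a ∈ I, (eval (fun _ => (0 : k))) a = 0 := by
    intro a ha
    rw [hI, Ideal.mem_span_singleton] at ha
    obtain ⟨c, rfl⟩ := ha
    simp
  set ev : R →+* k := Ideal.Quotient.lift I (eval (fun _ => (0 : k))) hIev with hev
  have hevx : ev x = 0 := by
    show Ideal.Quotient.lift I (eval (fun _ => (0 : k))) hIev
      (Ideal.Quotient.mk I (X 0)) = 0
    rw [Ideal.Quotient.lift_mk, eval_X]
  have hevy : ev y = 0 := by
    show Ideal.Quotient.lift I (eval (fun _ => (0 : k))) hIev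
      (Ideal.Quotient.mk I (X 1)) = 0
    rw [Ideal.Quotient.lift_mk, eval_X]
  have hxnu : ¬ IsUnit x := by
    intro h
    have := h.map ev
    rw [hevx] at this
    exact not_isUnit_zero this
  have hynu : ¬ IsUnit y := by
    intro h
    have := h.map ev
    rw [hevy] at this
    exact not_isUnit_zero this
  -- kernels
  have kerx : ∀ r : R, x * r = 0 ↔ ∃ s, r = y * s := by
    intro r
    obtain ⟨p, rfl⟩ := Ideal.Quotient.mk_surjective r
    constructor
    · intro h
      rw [show x * Ideal.Quotient.mk I p = Ideal.Quotient.mk I (X 0 * p) from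
        (map_mul _ _ _).symm, Ideal.Quotient.eq_zero_iff_mem, hI,
        Ideal.mem_span_singleton] at h
      obtain ⟨q, rfl⟩ := (mul_dvd_mul_iff_left hX0).mp h
      exact ⟨Ideal.Quotient.mk I q, by rw [map_mul]⟩
    · rintro ⟨s, hs⟩
      rw [hs, ← mul_assoc, hxy, zero_mul]
  have kery : ∀ r : R, y * r = 0 ↔ ∃ s, r = x * s := by
    intro r
    obtain ⟨p, rfl⟩ := Ideal.Quotient.mk_surjective r
    constructor
    · intro h
      rw [show y * Ideal.Quotient.mk I p = Ideal.Quotient.mk I (X 1 * p) from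
        (map_mul _ _ _).symm, Ideal.Quotient.eq_zero_iff_mem, hI,
        Ideal.mem_span_singleton, mul_comm (X 0 : P) (X 1)] at h
      obtain ⟨q, rfl⟩ := (mul_dvd_mul_iff_left hX1).mp h
      exact ⟨Ideal.Quotient.mk I q, by rw [map_mul]⟩
    · rintro ⟨s, hs⟩
      rw [hs, ← mul_assoc, mul_comm y x, hxy, zero_mul]
  -- y ∉ (x) and x ∉ (y)
  have hynx : y ∉ Ideal.span {x} := by
    intro h
    rw [Ideal.mem_span_singleton] at h
    obtain ⟨s, hs⟩ := h
    have hIψ : ∀ a ∈ I, (aeval (fun i : Fin 2 => if i = 0 then 0 else X i) :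
        P →ₐ[k] P) a = 0 := by
      intro a ha
      rw [hI, Ideal.mem_span_singleton] at ha
      obtain ⟨c, rfl⟩ := ha
      simp
    set φ : R →+* P := Ideal.Quotient.lift I
      (aeval (fun i : Fin 2 => if i = 0 then 0 else X i) : P →ₐ[k] P).toRingHom hIψ
      with hφ
    have h1 : φ y = X 1 := by
      show Ideal.Quotient.lift I _ hIψ (Ideal.Quotient.mk I (X 1)) = X 1
      rw [Ideal.Quotient.lift_mk]
      show (aeval fun i : Fin 2 => if i = 0 then 0 else X i) (X 1) = X 1
      rw [aeval_X, if_neg (by decide)]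
    have h0 : φ x = 0 := by
      show Ideal.Quotient.lift I _ hIψ (Ideal.Quotient.mk I (X 0)) = 0
      rw [Ideal.Quotient.lift_mk]
      show (aeval fun i : Fin 2 => if i = 0 then 0 else X i) (X 0) = 0
      rw [aeval_X, if_pos rfl]
    have := congrArg φ hs
    rw [h1, map_mul, h0, zero_mul] at this
    exact hX1 this
  have hxny : x ∉ Ideal.span {y} := by
    intro h
    rw [Ideal.mem_span_singleton] at h
    obtain ⟨s, hs⟩ := h
    have hIψ : ∀ a ∈ I, (aeval (fun i : Fin 2 => if i = 1 then 0 else X i) :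
        P →ₐ[k] P) a = 0 := by
      intro a ha
      rw [hI, Ideal.mem_span_singleton] at ha
      obtain ⟨c, rfl⟩ := ha
      simp
    set φ : R →+* P := Ideal.Quotient.lift I
      (aeval (fun i : Fin 2 => if i = 1 then 0 else X i) : P →ₐ[k] P).toRingHom hIψ
      with hφ
    have h1 : φ x = X 0 := by
      show Ideal.Quotient.lift I _ hIψ (Ideal.Quotient.mk I (X 0)) = X 0
      rw [Ideal.Quotient.lift_mk]
      show (aeval fun i : Fin 2 => if i = 1 then 0 else X i) (X 0) = X 0
      rw [aeval_X, if_neg (by decide)]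
    have h0 : φ y = 0 := by
      show Ideal.Quotient.lift I _ hIψ (Ideal.Quotient.mk I (X 1)) = 0
      rw [Ideal.Quotient.lift_mk]
      show (aeval fun i : Fin 2 => if i = 1 then 0 else X i) (X 1) = 0
      rw [aeval_X, if_pos rfl]
    have := congrArg φ hs
    rw [h1, map_mul, h0, zero_mul] at this
    exact hX0 this
  have hd_odd : ∀ n, Odd n → d n = x := fun n h => if_pos h
  have hd_even : ∀ n, ¬ Odd n → d n = y := fun n h => if_neg h
  refine ⟨?_, ?_, ?_, ?_, ?_, ?_, ?_⟩
  · intro n _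
    by_cases h : Odd n
    · rw [hd_odd n h]; exact hxnu
    · rw [hd_even n h]; exact hynu
  · intro r
    rw [hd_odd 1 odd_one, Ideal.Quotient.eq_zero_iff_mem, Ideal.mem_span_singleton]
    exact dvd_def
  · intro n _ r
    by_cases h : Odd n
    · rw [hd_odd n h, hd_even (n + 1) (Nat.not_odd_iff_even.mpr h.add_one)]
      exact kerx r
    · rw [hd_even n h, hd_odd (n + 1) ((Nat.not_odd_iff_even.mp h).add_one)]
      exact kery r
  · intro n _ h
    rw [hd_odd n h]
  · intro n _ h
    rw [hd_even n (Nat.not_odd_iff_even.mpr h)]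
  · intro h
    exact hynx (h ▸ Ideal.subset_span (by simp))
  · intro h
    exact hxny (h ▸ Ideal.subset_span (by simp))
end

section
/- Let (R, m) be a Noetherian local ring, x ∈ m with x ∉ m², and suppose the initial form x* is a nonzerodivisor in the associated graded ring gr_m(R) (x is super-regular). If z ∈ R and t ≥ 0 are such that x·z ∈ m^{t+2}, then z ∈ m^{t+1}. -/
open IsLocalRing

/-- Key property of super-regular elements (used in Theorem 5.3): let `(R, m)` be a
Noetherian local ring and `x ∈ m \ m²` super-regular, i.e. the initial form `x*` is a
nonzerodivisor in the associated graded ring `gr_m(R)` (expressed degree-wise: for all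
`n` and all `z ∈ m^n`, `x·z ∈ m^{n+2}` implies `z ∈ m^{n+1}`).  Then for any `z ∈ R`
and `t ≥ 0`, `x·z ∈ m^{t+2}` implies `z ∈ m^{t+1}`. -/
theorem mem_pow_succ_of_superRegular_mul_mem {R : Type*} [CommRing R]
    [IsNoetherianRing R] [IsLocalRing R]
    (x : R) (hx : x ∈ maximalIdeal R) (hx2 : x ∉ (maximalIdeal R) ^ 2)
    (hsr : ∀ n : ℕ, ∀ z ∈ (maximalIdeal R) ^ n,
      x * z ∈ (maximalIdeal R) ^ (n + 2) → z ∈ (maximalIdeal R) ^ (n + 1))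
    (z : R) (t : ℕ) (h : x * z ∈ (maximalIdeal R) ^ (t + 2)) :
    z ∈ (maximalIdeal R) ^ (t + 1) := by
  have key : ∀ k, k ≤ t + 1 → z ∈ (maximalIdeal R) ^ k := by
    intro k
    induction k with
    | zero => intro _; simp
    | succ k ih =>
      intro hk
      have hz : z ∈ (maximalIdeal R) ^ k := ih (Nat.le_of_succ_le hk)
      exact hsr k z hz (Ideal.pow_le_pow_right (by omega) h)
  exact key (t + 1) le_rfl
end
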